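/- arXiv:cs/0602041 — 5 statements merged into one kernel-verified Lean document; each statement's English description precedes it below -/
import Mathlib

section
/- For any dissimilarity map δ on a finite set X with |X| = n ≥ 3, and any taxon a ∈ X, if δ' is the shift of δ by ε around a (i.e., δ'(a,x) = δ(a,x) + ε for all x ≠ a and δ'(x,y) = δ(x,y) otherwise), then for every pair of distinct taxa x, y ∈ X, the neighbor-joining Q-criterion satisfies Q_{δ'}(x,y) = Q_δ(x,y) - 2ε/(n-2) · c, where the change is the same constant for all pairs; in particular, a pair minimizes Q_{δ'} if and only if it minimizes Q_δ. -/
/-!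
Adding `w x + w y` to every off-diagonal entry `δ(x, y)` raises each row sum `∑_{k ≠ x} δ(x, k)`
by `(n - 2) w x + ∑ w`, so the `w`-terms cancel in `Q` and the Q-criterion of every pair drops by
the same constant `2 ∑ w / (n - 2)`. A shift by `ε` around `a` is the case `w = Pi.single a ε`.
-/

open Finset

/-- The neighbor-joining Q-criterion for a dissimilarity map `δ` on `X`:
`Q_δ(i,j) = δ(i,j) - (1/(n-2)) (∑_{k≠i} δ(i,k) + ∑_{k≠j} δ(j,k))` with `n = |X|`. -/
noncomputable def njQ {X : Type*} [Fintype X] [DecidableEq X]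
    (δ : X → X → ℝ) (i j : X) : ℝ :=
  δ i j - (1 / ((Fintype.card X : ℝ) - 2)) *
    ((∑ k ∈ Finset.univ.erase i, δ i k) + (∑ k ∈ Finset.univ.erase j, δ j k))

section AddWeights

variable {X : Type*} [Fintype X] [DecidableEq X] {δ δ' : X → X → ℝ} {w : X → ℝ}

theorem sum_erase_eq_of_add_weights (hδ' : ∀ x y, x ≠ y → δ' x y = δ x y + w x + w y)
    (x : X) :
    ∑ k ∈ univ.erase x, δ' x k =
      ∑ k ∈ univ.erase x, δ x k + ((Fintype.card X : ℝ) - 2) * w x + ∑ k, w k := by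
  have hx : x ∈ univ := mem_univ x
  rw [sum_congr rfl fun k hk => hδ' x k (ne_of_mem_erase hk).symm, sum_add_distrib,
    sum_add_distrib, sum_const, card_erase_of_mem hx, card_univ, nsmul_eq_mul,
    sum_erase_eq_sub (f := w) hx, Nat.cast_pred (Fintype.card_pos_iff.2 ⟨x⟩)]
  ring

theorem njQ_eq_of_add_weights (hn : Fintype.card X ≠ 2)
    (hδ' : ∀ x y, x ≠ y → δ' x y = δ x y + w x + w y) {x y : X} (hxy : x ≠ y) :
    njQ δ' x y = njQ δ x y - 2 * (∑ k, w k) / ((Fintype.card X : ℝ) - 2) := by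
  have hn' : (Fintype.card X : ℝ) - 2 ≠ 0 := sub_ne_zero.2 (by exact_mod_cast hn)
  unfold njQ
  rw [hδ' x y hxy, sum_erase_eq_of_add_weights hδ', sum_erase_eq_of_add_weights hδ']
  field_simp
  ring

end AddWeights

theorem shift_eq_add_single {X : Type*} [DecidableEq X] {δ δ' : X → X → ℝ}
    (hsym : ∀ x y, δ x y = δ y x) (hsym' : ∀ x y, δ' x y = δ' y x) {a : X} {ε : ℝ}
    (hshift : ∀ x, x ≠ a → δ' a x = δ a x + ε)
    (hrest : ∀ x y, x ≠ a → y ≠ a → δ' x y = δ x y) {x y : X} (hxy : x ≠ y) :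
    δ' x y = δ x y + (Pi.single a ε : X → ℝ) x + (Pi.single a ε : X → ℝ) y := by
  rcases eq_or_ne x a with rfl | hxa
  · simp [hshift y hxy.symm, hxy.symm]
  rcases eq_or_ne y a with rfl | hya
  · simp [hsym' x y, hsym x y, hshift x hxa, hxa]
  · simp [hrest x y hxa hya, hxa, hya]

theorem statement_0_general {X : Type*} [Fintype X] [DecidableEq X]
    (hn : 3 ≤ Fintype.card X)
    (δ δ' : X → X → ℝ)
    (hsym : ∀ x y, δ x y = δ y x)
    (hsym' : ∀ x y, δ' x y = δ' y x)
    (a : X) (ε : ℝ)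
    (hshift : ∀ x, x ≠ a → δ' a x = δ a x + ε)
    (hrest : ∀ x y, x ≠ a → y ≠ a → δ' x y = δ x y) :
    (∀ x y : X, x ≠ y →
        njQ δ' x y = njQ δ x y - 2 * ε / ((Fintype.card X : ℝ) - 2)) ∧
    (∀ x y : X, x ≠ y →
        ((∀ p q : X, p ≠ q → njQ δ' x y ≤ njQ δ' p q) ↔
         (∀ p q : X, p ≠ q → njQ δ x y ≤ njQ δ p q))) := by
  have hQ : ∀ x y : X, x ≠ y →
      njQ δ' x y = njQ δ x y - 2 * ε / ((Fintype.card X : ℝ) - 2) := fun x y hxy => by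
    simpa only [Fintype.sum_pi_single'] using
      njQ_eq_of_add_weights (by omega) (fun _ _ => shift_eq_add_single hsym hsym' hshift hrest) hxy
  refine ⟨hQ, fun x y hxy => forall₂_congr fun p q => imp_congr_right fun hpq => ?_⟩
  rw [hQ x y hxy, hQ p q hpq]
  exact sub_le_sub_iff_right _

/-- shifting a dissimilarity map by `ε` around a taxon `a` changes the
Q-criterion of every pair by the same constant `-2ε/(n-2)`; in particular a pair
minimizes `Q_{δ'}` iff it minimizes `Q_δ`. -/
theorem statement_0 {X : Type*} [Fintype X] [DecidableEq X]
    (hn : 3 ≤ Fintype.card X)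
    (δ δ' : X → X → ℝ)
    (hsym : ∀ x y, δ x y = δ y x) (hdiag : ∀ x, δ x x = 0)
    (hsym' : ∀ x y, δ' x y = δ' y x) (hdiag' : ∀ x, δ' x x = 0)
    (a : X) (ε : ℝ)
    (hshift : ∀ x, x ≠ a → δ' a x = δ a x + ε)
    (hrest : ∀ x y, x ≠ a → y ≠ a → δ' x y = δ x y) :
    (∀ x y : X, x ≠ y →
        njQ δ' x y = njQ δ x y - 2 * ε / ((Fintype.card X : ℝ) - 2)) ∧
    (∀ x y : X, x ≠ y →
        ((∀ p q : X, p ≠ q → njQ δ' x y ≤ njQ δ' p q) ↔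
         (∀ p q : X, p ≠ q → njQ δ x y ≤ njQ δ p q))) :=
  statement_0_general hn δ δ' hsym hsym' a ε hshift hrest
end

section
/- Let X = {i,j,k,l} be a four-element set and δ a dissimilarity map on X. The pair (i,j) minimizes the neighbor-joining Q-criterion Q_δ among all pairs if and only if δ(i,j) + δ(k,l) ≤ min(δ(i,k) + δ(j,l), δ(i,l) + δ(j,k)). -/
open Finset

/-!
For `n = 4` the Q-value of a pair `{w, x}` with complement `{y, z}` is minus half the sum of the
four distances across the split `wx | yz`, i.e. `(δ w x + δ y z - T) / 2` with `T` the sum of all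
six distances. So `Q` is minimized exactly at the pairs whose split has the least sum
`δ w x + δ y z`.
-/

theorem Finset.card_insert_four {X : Type*} [DecidableEq X] {w x y z : X}
    (hwx : w ≠ x) (hwy : w ≠ y) (hwz : w ≠ z) (hxy : x ≠ y) (hxz : x ≠ z) (hyz : y ≠ z) :
    #({w, x, y, z} : Finset X) = 4 :=
  Finset.card_eq_four.2 ⟨w, x, y, z, hwx, hwy, hwz, hxy, hxz, hyz, rfl⟩

section FourPoints

variable {X : Type*} [Fintype X] [DecidableEq X]

theorem njQ_comm {δ : X → X → ℝ} (hsym : ∀ a b, δ a b = δ b a) (p q : X) :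
    njQ δ p q = njQ δ q p := by
  rw [njQ, njQ, hsym p q, add_comm]

theorem njQ_eq_of_card_eq_four (hX : Fintype.card X = 4) {δ : X → X → ℝ}
    (hsym : ∀ a b, δ a b = δ b a) {w x y z : X} (hwx : w ≠ x) (hwy : w ≠ y) (hwz : w ≠ z)
    (hxy : x ≠ y) (hxz : x ≠ z) (hyz : y ≠ z) :
    njQ δ w x = -(δ w y + δ w z + δ x y + δ x z) / 2 := by
  have huniv : ({w, x, y, z} : Finset X) = univ :=
    eq_univ_of_card _ ((card_insert_four hwx hwy hwz hxy hxz hyz).trans hX.symm)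
  have hw : univ.erase w = ({x, y, z} : Finset X) := by
    rw [← huniv, erase_insert (by simp [hwx, hwy, hwz])]
  have hx : univ.erase x = ({w, y, z} : Finset X) := by
    rw [← huniv, insert_comm, erase_insert (by simp [hwx.symm, hxy, hxz])]
  rw [njQ, hw, hx, hX, sum_insert (by simp [hxy, hxz]), sum_insert (by simp [hyz]),
    sum_insert (by simp [hwy, hwz]), sum_insert (by simp [hyz]), sum_singleton, sum_singleton,
    hsym x w]
  norm_num
  ring

theorem forall_ne_of_insert_four_eq_univ {P : X → X → Prop} (hP : ∀ p q, P p q → P q p)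
    {i j k l : X}
    (hcover : ({i, j, k, l} : Finset X) = univ)
    (h : P i j ∧ P i k ∧ P i l ∧ P j k ∧ P j l ∧ P k l) : ∀ p q, p ≠ q → P p q := by
  obtain ⟨hij, hik, hil, hjk, hjl, hkl⟩ := h
  intro p q hpq
  have hmem : ∀ t, t = i ∨ t = j ∨ t = k ∨ t = l := fun t ↦ by
    simpa only [← hcover, mem_insert, mem_singleton] using mem_univ t
  rcases hmem p with rfl | rfl | rfl | rfl <;> rcases hmem q with rfl | rfl | rfl | rfl <;>
    first | exact absurd rfl hpq | assumption | exact hP _ _ ‹_›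

end FourPoints

theorem statement_1_general {X : Type*} [Fintype X] [DecidableEq X]
    (i j k l : X)
    (hij : i ≠ j) (hik : i ≠ k) (hil : i ≠ l)
    (hjk : j ≠ k) (hjl : j ≠ l) (hkl : k ≠ l)
    (hcover : ({i, j, k, l} : Finset X) = Finset.univ)
    (δ : X → X → ℝ)
    (hsym : ∀ x y, δ x y = δ y x) :
    (∀ p q : X, p ≠ q → njQ δ i j ≤ njQ δ p q) ↔
      δ i j + δ k l ≤ min (δ i k + δ j l) (δ i l + δ j k) := by
  have hX : Fintype.card X = 4 := by
    rw [← card_univ, ← hcover, card_insert_four hij hik hil hjk hjl hkl]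
  have Qij := njQ_eq_of_card_eq_four hX hsym hij hik hil hjk hjl hkl
  have Qik := njQ_eq_of_card_eq_four hX hsym hik hij hil hjk.symm hkl hjl
  have Qil := njQ_eq_of_card_eq_four hX hsym hil hij hik hjl.symm hkl.symm hjk
  have Qjk := njQ_eq_of_card_eq_four hX hsym hjk hij.symm hjl hik.symm hkl hil
  have Qjl := njQ_eq_of_card_eq_four hX hsym hjl hij.symm hjk hil.symm hkl.symm hik
  have Qkl := njQ_eq_of_card_eq_four hX hsym hkl hik.symm hjk.symm hil.symm hjl.symm hij
  simp only [hsym j i, hsym k i, hsym l i, hsym k j, hsym l j, hsym l k] at Qik Qil Qjk Qjl Qkl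
  rw [le_min_iff]
  constructor
  · intro h
    have hQik := h i k hik
    have hQil := h i l hil
    constructor <;> linarith
  · rintro ⟨hB, hC⟩
    refine forall_ne_of_insert_four_eq_univ (P := fun p q ↦ njQ δ i j ≤ njQ δ p q)
      (fun p q h ↦ h.trans (njQ_comm hsym p q).le) hcover ⟨le_rfl, ?_, ?_, ?_, ?_, ?_⟩ <;>
      linarith

/-- on a four-element set `X = {i,j,k,l}`, the pair `(i,j)` minimizes the
Q-criterion iff `δ(i,j)+δ(k,l) ≤ min(δ(i,k)+δ(j,l), δ(i,l)+δ(j,k))`. -/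
theorem statement_1 {X : Type*} [Fintype X] [DecidableEq X]
    (i j k l : X)
    (hij : i ≠ j) (hik : i ≠ k) (hil : i ≠ l)
    (hjk : j ≠ k) (hjl : j ≠ l) (hkl : k ≠ l)
    (hcover : ({i, j, k, l} : Finset X) = Finset.univ)
    (δ : X → X → ℝ)
    (hsym : ∀ x y, δ x y = δ y x) (hdiag : ∀ x, δ x x = 0) :
    (∀ p q : X, p ≠ q → njQ δ i j ≤ njQ δ p q) ↔
      δ i j + δ k l ≤ min (δ i k + δ j l) (δ i l + δ j k) :=
  statement_1_general i j k l hij hik hil hjk hjl hkl hcover δ hsym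
end

section
/- For any dissimilarity map δ on a finite set X with |X| = n ≥ 4 and any distinct i,j ∈ X, the Z-criterion Z_δ(i,j) = (1/C(n-1,2)) ∑_{{k,l} ⊆ X\{i,j}} w_δ(ij:kl) satisfies Z_δ(i,j) = -L_δ - Q_δ(i,j), where L_δ = (1/C(n-1,2)) ∑_{{x,y} ⊆ X} δ(x,y) does not depend on i or j. Consequently, a pair maximizes Z_δ if and only if it minimizes Q_δ. -/
open Finset

/-- `w_δ(ij:kl) = (1/2)(δ(i,k)+δ(i,l)+δ(j,k)+δ(j,l)) - δ(i,j) - δ(k,l)`. -/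
noncomputable def njw {X : Type*} (δ : X → X → ℝ) (i j k l : X) : ℝ :=
  (δ i k + δ i l + δ j k + δ j l) / 2 - δ i j - δ k l

/-- The (unscaled) Z-criterion `Z_δ(i,j) = (1/C(n-1,2)) ∑_{{k,l} ⊆ X\{i,j}} w_δ(ij:kl)`,
where the sum over unordered pairs is written as half the sum over ordered pairs. -/
noncomputable def njZu {X : Type*} [Fintype X] [DecidableEq X]
    (δ : X → X → ℝ) (i j : X) : ℝ :=
  (1 / ((Fintype.card X - 1).choose 2 : ℝ)) *
    ((1 / 2) * ∑ k ∈ (Finset.univ.erase i).erase j,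
      ∑ l ∈ ((Finset.univ.erase i).erase j).erase k, njw δ i j k l)

/-- `L_δ = (1/C(n-1,2)) ∑_{{x,y} ⊆ X} δ(x,y)` (sum over unordered pairs). -/
noncomputable def njL {X : Type*} [Fintype X] [DecidableEq X]
    (δ : X → X → ℝ) : ℝ :=
  (1 / ((Fintype.card X - 1).choose 2 : ℝ)) *
    ((1 / 2) * ∑ x : X, ∑ y ∈ Finset.univ.erase x, δ x y)

/-!
Write `r x = ∑ y, δ x y` and `T = ∑ x, r x`. Splitting `w_δ(ij:kl)` into its part linear in the
distances to `i, j`, the constant `δ(i,j)` and `δ(k,l)`, the sum of `w_δ(ij:kl)` over ordered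
pairs `k ≠ l` in `X ∖ {i,j}` is `(n-1)(r i + r j) - T - (n-1)(n-2) δ(i,j)`, since the `δ`-block on
`X ∖ {i,j}` sums to `T - 2 r i - 2 r j + 2 δ(i,j)`. Dividing by `2 C(n-1,2) = (n-1)(n-2)` gives
`Z_δ(i,j) = -T/((n-1)(n-2)) - δ(i,j) + (r i + r j)/(n-2) = -L_δ - Q_δ(i,j)`, and as `L_δ` does
not depend on the pair, maximising `Z_δ` is minimising `Q_δ`.
-/

namespace Finset

variable {α M : Type*} [DecidableEq α] [AddCommGroup M]

theorem sum_erase_erase_eq_sub {s : Finset α} {i j : α} (hi : i ∈ s) (hj : j ∈ s) (hij : i ≠ j)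
    (f : α → M) : ∑ x ∈ (s.erase i).erase j, f x = ∑ x ∈ s, f x - f i - f j := by
  rw [sum_erase_eq_sub (mem_erase.2 ⟨hij.symm, hj⟩), sum_erase_eq_sub hi]

theorem sum_sum_erase_eq_sub (s : Finset α) (F : α → α → M) :
    ∑ k ∈ s, ∑ l ∈ s.erase k, F k l = ∑ k ∈ s, ∑ l ∈ s, F k l - ∑ k ∈ s, F k k := by
  rw [← sum_sub_distrib]
  exact sum_congr rfl fun k hk => sum_erase_eq_sub hk

end Finset

theorem Nat.cast_sub_one_choose_two {n : ℕ} (hn : 1 ≤ n) :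
    (((n - 1).choose 2 : ℕ) : ℝ) = ((n : ℝ) - 1) * ((n : ℝ) - 2) / 2 := by
  rw [Nat.cast_choose_two, Nat.cast_sub hn]
  ring

section

variable {X : Type*} [DecidableEq X] {δ : X → X → ℝ}

theorem sum_sum_erase_njw (hdiag : ∀ x, δ x x = 0) (i j : X) (S : Finset X) :
    ∑ k ∈ S, ∑ l ∈ S.erase k, njw δ i j k l =
      (#S - 1) * ∑ k ∈ S, (δ i k + δ j k) - #S * (#S - 1) * δ i j
        - ∑ k ∈ S, ∑ l ∈ S, δ k l := by
  rw [sum_sum_erase_eq_sub]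
  simp only [njw, hdiag, sum_sub_distrib, sum_add_distrib, ← sum_div, sum_const, nsmul_eq_mul]
  simp only [← mul_sum]
  ring

variable [Fintype X] (hsym : ∀ x y, δ x y = δ y x) (hdiag : ∀ x, δ x x = 0) {i j : X}
include hsym hdiag

theorem sum_erase_erase_add_eq (hij : i ≠ j) :
    ∑ k ∈ (univ.erase i).erase j, (δ i k + δ j k) = ∑ k, δ i k + ∑ k, δ j k - 2 * δ i j := by
  rw [sum_erase_erase_eq_sub (mem_univ i) (mem_univ j) hij, sum_add_distrib, hdiag, hdiag,
    hsym j i]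
  ring

theorem sum_sum_erase_erase_eq (hij : i ≠ j) :
    ∑ k ∈ (univ.erase i).erase j, ∑ l ∈ (univ.erase i).erase j, δ k l =
      ∑ k, ∑ l, δ k l - 2 * ∑ k, δ i k - 2 * ∑ k, δ j k + 2 * δ i j := by
  have hcol : ∀ y, ∑ k, δ k y = ∑ k, δ y k := fun y => sum_congr rfl fun k _ => hsym k y
  simp only [sum_erase_erase_eq_sub (mem_univ i) (mem_univ j) hij, sum_sub_distrib, hcol,
    hdiag, hsym j i]
  ring

theorem njZu_eq_neg_njL_sub_njQ (hn : 3 ≤ Fintype.card X) (hij : i ≠ j) :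
    njZu δ i j = -njL δ - njQ δ i j := by
  have hrow : ∀ x, ∑ y ∈ univ.erase x, δ x y = ∑ y, δ x y := fun x => sum_erase _ (hdiag x)
  have hcard : (#((univ.erase i).erase j) : ℝ) = Fintype.card X - 2 := by
    rw [card_erase_of_mem (mem_erase.2 ⟨hij.symm, mem_univ j⟩), card_erase_of_mem (mem_univ i),
      card_univ, Nat.cast_sub (by omega), Nat.cast_sub (by omega)]
    ring
  have hn' : (3 : ℝ) ≤ Fintype.card X := by exact_mod_cast hn
  unfold njZu njL njQ
  rw [sum_sum_erase_njw hdiag, hcard, sum_erase_erase_add_eq hsym hdiag hij,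
    sum_sum_erase_erase_eq hsym hdiag hij, hrow, hrow, sum_congr rfl fun x _ => hrow x,
    Nat.cast_sub_one_choose_two (by omega)]
  have : (Fintype.card X : ℝ) - 1 ≠ 0 := by linarith
  have : (Fintype.card X : ℝ) - 2 ≠ 0 := by linarith
  field_simp
  ring

end

/-- `Z_δ(i,j) = -L_δ - Q_δ(i,j)` for all distinct `i,j`; consequently a pair
maximizes `Z_δ` iff it minimizes `Q_δ`. -/
theorem statement_2 {X : Type*} [Fintype X] [DecidableEq X]
    (hn : 4 ≤ Fintype.card X)
    (δ : X → X → ℝ)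
    (hsym : ∀ x y, δ x y = δ y x) (hdiag : ∀ x, δ x x = 0) :
    (∀ i j : X, i ≠ j → njZu δ i j = -njL δ - njQ δ i j) ∧
    (∀ i j : X, i ≠ j →
      ((∀ p q : X, p ≠ q → njZu δ p q ≤ njZu δ i j) ↔
       (∀ p q : X, p ≠ q → njQ δ i j ≤ njQ δ p q))) := by
  have hZ : ∀ i j : X, i ≠ j → njZu δ i j = -njL δ - njQ δ i j :=
    fun i j => njZu_eq_neg_njL_sub_njQ hsym hdiag (by omega)
  refine ⟨hZ, fun i j hij => forall₂_congr fun p q => imp_congr_right fun hpq => ?_⟩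
  rw [hZ p q hpq, hZ i j hij, sub_le_sub_iff_left]
end

section
/- Let (x,y) be a pair of leaves of a tree T whose paths to the split edge e (inducing split A|B, with x,y ∈ A) merge at an interior point o, and suppose δ is A|B-consistent with respect to δ_T with bound l/4 where l = l(e). Define δ' on X' = (X\{x,y}) ∪ {z} by δ'(z,a) = (1/2)(δ(x,a) + δ(y,a) - δ_T(x,y)) and δ'(a,b) = δ(a,b) otherwise, and let T' be T with x,y removed and z placed at o. Then for every b ∈ B: |δ'(z,b) - δ_{T'}(z,b)| < l/4, i.e., cross-split errors at the new taxon remain bounded by l/4. -/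
/-- let `A|B` be the split of edge `e` (of length `l`), with `x, y ∈ A`,
and let `δ` be `A|B`-consistent with respect to the tree metric `δT` (errors on pairs
within `A` and within `B` bounded above by `l/4`, cross-split errors bounded in absolute
value by `l/4`). The reduced taxon `z` satisfies `δ'(z,b) = (δ(x,b)+δ(y,b)-δT(x,y))/2`,
and its position `o` in the reduced tree satisfies
`δ_{T'}(z,b) = (δT(x,b)+δT(y,b)-δT(x,y))/2` for every `b ∈ B`. Then the new cross-split
errors remain bounded: `|δ'(z,b) - δ_{T'}(z,b)| < l / 4` for all `b ∈ B`. -/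
theorem statement_18 {X : Type*} (A : Set X)
    (x y : X) (hx : x ∈ A) (hy : y ∈ A) (hxy : x ≠ y)
    (l : ℝ) (hl : 0 < l)
    (δ δT : X → X → ℝ)
    (hsym : ∀ p q, δ p q = δ q p) (hdiag : ∀ p, δ p p = 0)
    (hsymT : ∀ p q, δT p q = δT q p) (hdiagT : ∀ p, δT p p = 0)
    (hwithin : ∀ p q : X, p ≠ q → ((p ∈ A ∧ q ∈ A) ∨ (p ∉ A ∧ q ∉ A)) →
        δ p q - δT p q < l / 4)
    (hcross : ∀ p q : X, p ∈ A → q ∉ A → |δ p q - δT p q| < l / 4) :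
    ∀ b : X, b ∉ A →
      |(δ x b + δ y b - δT x y) / 2 - (δT x b + δT y b - δT x y) / 2| < l / 4 := by
  intro b hb
  have h1 := hcross x b hx hb
  have h2 := hcross y b hy hb
  have : (δ x b + δ y b - δT x y) / 2 - (δT x b + δT y b - δT x y) / 2
      = ((δ x b - δT x b) + (δ y b - δT y b)) / 2 := by ring
  rw [this]
  calc |((δ x b - δT x b) + (δ y b - δT y b)) / 2|
      ≤ (|δ x b - δT x b| + |δ y b - δT y b|) / 2 := by
        rw [abs_div, abs_of_pos (by norm_num : (0:ℝ) < 2)]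
        exact div_le_div_of_nonneg_right (abs_add_le _ _) (by norm_num) |>.trans_eq rfl
    _ < (l / 4 + l / 4) / 2 := by linarith
    _ ≤ l / 4 := by linarith
end

section
/- Let μ be a dissimilarity map on a four-element set {a, b, u, x} satisfying μ(a,u) + μ(x,b) = μ(b,u) + μ(x,a) = μ(x,u) + μ(a,b) - 4.25. Then there is no tree metric ν on {a,b,u,x} with ‖μ - ν‖_∞ ≤ 1. (This is the four-point-condition argument showing the reduced dissimilarity map in Theorem 34 is far from every tree metric.) -/
/-- if `μ` is a dissimilarity map on the four-element set `{a,b,u,x}` with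
`μ(a,u)+μ(x,b) = μ(b,u)+μ(x,a) = μ(x,u)+μ(a,b) - 4.25`, then there is no tree metric `ν`
on `{a,b,u,x}` with `‖μ - ν‖_∞ ≤ 1`. A tree metric on four points is a symmetric map
vanishing on the diagonal and satisfying the four point condition: each of the three
pairwise sums is at most the maximum of the other two (the two largest are equal). -/
theorem statement_19 {X : Type*} (a b u x : X)
    (hab : a ≠ b) (hau : a ≠ u) (hax : a ≠ x)
    (hbu : b ≠ u) (hbx : b ≠ x) (hux : u ≠ x)
    (hcover : ∀ v : X, v = a ∨ v = b ∨ v = u ∨ v = x)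
    (μ : X → X → ℝ)
    (hsym : ∀ p q, μ p q = μ q p) (hdiag : ∀ p, μ p p = 0)
    (h1 : μ a u + μ x b = μ b u + μ x a)
    (h2 : μ b u + μ x a = μ x u + μ a b - 4.25) :
    ¬ ∃ ν : X → X → ℝ,
        (∀ p q, ν p q = ν q p) ∧ (∀ p, ν p p = 0) ∧
        (∀ p q r s : X, ν p q + ν r s ≤ max (ν p r + ν q s) (ν p s + ν q r)) ∧
        (∀ p q, |μ p q - ν p q| ≤ 1) := by
  rintro ⟨ν, hνsym, hνdiag, h4pt, hclose⟩
  have h4 := h4pt x u a b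
  have e1 := abs_le.1 (hclose x u)
  have e2 := abs_le.1 (hclose a b)
  have e3 := abs_le.1 (hclose x a)
  have e4 := abs_le.1 (hclose u b)
  have e5 := abs_le.1 (hclose x b)
  have e6 := abs_le.1 (hclose u a)
  have hbu' : μ u b = μ b u := hsym u b
  have hau' : μ u a = μ a u := hsym u a
  rcases le_max_iff.1 h4 with h | h <;> linarith
end
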